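/- Let γ ∈ ℝ. The functions υ₀(η) = tanh(η)·sech²(η) and z₀(η) = (γ − 4)·tanh(η)·sech(η) satisfy, for all η ∈ ℝ: −υ₀''(η) + γ·υ₀(η) − 12·sech²(η)·υ₀(η) = sech(η)·z₀(η) and −z₀''(η) + z₀(η) − 2·sech²(η)·z₀(η) = 4·(γ − 4)·sech(η)·υ₀(η). Moreover ∫_ℝ sech(η)·υ₀(η)·z₀(η) dη = (4/15)·(γ − 4). -/

import Mathlib

/-!
Write `t = tanh` and `s = sech = 1 / cosh`. Since `t' = s²` and `s' = -t s`, differentiation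
maps monomials `tᵐ sⁿ` to polynomials in `t` and `s`, and both equations of the coupled system
reduce to the identity `t² + s² = 1`. The Krein integrand is
`(γ - 4) t² s⁴ = (γ - 4) (t³/3 - t⁵/5)'`, and `t → ±1` at `±∞`, so the integral is
`(γ - 4) · 2 (1/3 - 1/5)`. Integrability follows from `s² ≤ (1 + x²)⁻¹`, as
`cosh² = 1 + sinh²` and `|x| ≤ |sinh x|`.
-/

open Filter MeasureTheory Real
open scoped Topology

namespace Real

lemma tanh_sq_add_sech_sq (x : ℝ) : tanh x ^ 2 + (1 / cosh x) ^ 2 = 1 := by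
  have := cosh_pos x
  rw [tanh_eq_sinh_div_cosh]
  field_simp
  linarith [cosh_sq x]

lemma hasDerivAt_tanh (x : ℝ) : HasDerivAt tanh ((1 / cosh x) ^ 2) x := by
  have := cosh_pos x
  rw [show tanh = fun x => sinh x / cosh x from funext tanh_eq_sinh_div_cosh]
  refine ((hasDerivAt_sinh x).fun_div (hasDerivAt_cosh x) this.ne').congr_deriv ?_
  field_simp
  linarith [cosh_sq x]

lemma continuous_tanh : Continuous tanh :=
  continuous_iff_continuousAt.2 fun x => (hasDerivAt_tanh x).continuousAt

lemma continuous_sech : Continuous fun x => 1 / cosh x :=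
  continuous_const.div continuous_cosh fun x => (cosh_pos x).ne'

lemma hasDerivAt_sech (x : ℝ) :
    HasDerivAt (fun x => 1 / cosh x) (-(tanh x * (1 / cosh x))) x := by
  have := cosh_pos x
  refine ((hasDerivAt_const x 1).fun_div (hasDerivAt_cosh x) this.ne').congr_deriv ?_
  rw [tanh_eq_sinh_div_cosh]
  field_simp
  ring

lemma hasDerivAt_tanh_pow_mul_sech_pow (m n : ℕ) (x : ℝ) :
    HasDerivAt (fun x => tanh x ^ m * (1 / cosh x) ^ n)
      (m * tanh x ^ (m - 1) * (1 / cosh x) ^ (n + 2) - n * tanh x ^ (m + 1) * (1 / cosh x) ^ n)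
      x := by
  refine (((hasDerivAt_tanh x).fun_pow m).fun_mul ((hasDerivAt_sech x).fun_pow n)).congr_deriv ?_
  cases n with
  | zero => simp
  | succ n => simp only [Nat.cast_add, Nat.cast_one, add_tsub_cancel_right]; ring

lemma tendsto_tanh_atTop : Tendsto tanh atTop (𝓝 1) := by
  have h : ∀ x, tanh x = 1 - 2 / (exp (2 * x) + 1) := fun x => by
    rw [tanh_eq_sinh_div_cosh, sinh_eq, cosh_eq, show 2 * x = x + x by ring, exp_add, exp_neg]
    have := exp_pos x
    field_simp
    ring
  have hexp : Tendsto (fun x => exp (2 * x) + 1) atTop atTop :=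
    tendsto_atTop_add_const_right _ _
      (tendsto_exp_atTop.comp (tendsto_id.const_mul_atTop two_pos))
  simpa [← h] using (tendsto_const_nhds (x := (2 : ℝ))).div_atTop hexp |>.const_sub 1

lemma tendsto_tanh_atBot : Tendsto tanh atBot (𝓝 (-1)) := by
  simpa [Function.comp_def] using (tendsto_tanh_atTop.comp tendsto_neg_atBot_atTop).neg

lemma sech_sq_le_inv_one_add_sq (x : ℝ) : (1 / cosh x) ^ 2 ≤ (1 + x ^ 2)⁻¹ := by
  have hx : x ^ 2 ≤ sinh x ^ 2 := by
    rw [← sq_abs x, ← sq_abs (sinh x), abs_sinh]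
    exact pow_le_pow_left₀ (abs_nonneg x) (self_le_sinh_iff.mpr (abs_nonneg x)) 2
  rw [div_pow, one_pow, cosh_sq, one_div]
  exact inv_anti₀ (by positivity) (by linarith)

lemma integrable_sech_sq : Integrable fun x => (1 / cosh x) ^ 2 := by
  refine integrable_inv_one_add_sq.mono' (continuous_sech.pow 2).aestronglyMeasurable
    (ae_of_all _ fun x => ?_)
  rw [Real.norm_of_nonneg (by positivity)]
  exact sech_sq_le_inv_one_add_sq x

end Real

lemma deriv_deriv_eq_of_hasDerivAt {f f' f'' : ℝ → ℝ} (hf : ∀ x, HasDerivAt f (f' x) x)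
    (hf' : ∀ x, HasDerivAt f' (f'' x) x) (x : ℝ) : deriv (deriv f) x = f'' x := by
  rw [show deriv f = f' from funext fun x => (hf x).deriv]
  exact (hf' x).deriv

lemma hasDerivAt_tanh_mul_sech_sq (x : ℝ) :
    HasDerivAt (fun x => tanh x * (1 / cosh x) ^ 2)
      ((1 / cosh x) ^ 4 - 2 * tanh x ^ 2 * (1 / cosh x) ^ 2) x := by
  simpa using hasDerivAt_tanh_pow_mul_sech_pow 1 2 x

lemma hasDerivAt_sech_pow_four_sub_two_mul_tanh_sq_mul_sech_sq (x : ℝ) :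
    HasDerivAt (fun x => (1 / cosh x) ^ 4 - 2 * tanh x ^ 2 * (1 / cosh x) ^ 2)
      (4 * tanh x ^ 3 * (1 / cosh x) ^ 2 - 8 * tanh x * (1 / cosh x) ^ 4) x := by
  have h := (hasDerivAt_tanh_pow_mul_sech_pow 0 4 x).fun_sub
    ((hasDerivAt_tanh_pow_mul_sech_pow 2 2 x).const_mul 2)
  simp only [pow_zero, one_mul, mul_assoc] at h ⊢
  refine h.congr_deriv ?_
  push_cast
  ring

lemma hasDerivAt_const_mul_tanh_mul_sech (c x : ℝ) :
    HasDerivAt (fun x => c * tanh x * (1 / cosh x))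
      (c * ((1 / cosh x) ^ 3 - tanh x ^ 2 * (1 / cosh x))) x := by
  have h := (hasDerivAt_tanh_pow_mul_sech_pow 1 1 x).const_mul c
  simp only [pow_one, ← mul_assoc] at h
  refine h.congr_deriv ?_
  push_cast
  ring

lemma hasDerivAt_const_mul_sech_pow_three_sub_tanh_sq_mul_sech (c x : ℝ) :
    HasDerivAt (fun x => c * ((1 / cosh x) ^ 3 - tanh x ^ 2 * (1 / cosh x)))
      (c * (tanh x ^ 3 * (1 / cosh x) - 5 * tanh x * (1 / cosh x) ^ 3)) x := by
  have h := ((hasDerivAt_tanh_pow_mul_sech_pow 0 3 x).fun_sub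
    (hasDerivAt_tanh_pow_mul_sech_pow 2 1 x)).const_mul c
  simp only [pow_zero, one_mul, pow_one] at h
  refine h.congr_deriv ?_
  push_cast
  ring

lemma integrable_tanh_sq_mul_sech_pow_four :
    Integrable fun x => tanh x ^ 2 * (1 / cosh x) ^ 4 := by
  have hc : Continuous fun x => tanh x ^ 2 * (1 / cosh x) ^ 4 :=
    (continuous_tanh.pow 2).mul (continuous_sech.pow 4)
  refine integrable_sech_sq.mono' hc.aestronglyMeasurable (ae_of_all _ fun x => ?_)
  rw [Real.norm_of_nonneg (by positivity)]
  nlinarith [tanh_sq_add_sech_sq x, mul_nonneg (sq_nonneg (tanh x)) (sq_nonneg (1 / cosh x))]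

lemma integral_tanh_sq_mul_sech_pow_four :
    ∫ x, tanh x ^ 2 * (1 / cosh x) ^ 4 = 4 / 15 := by
  have hF : ∀ x, HasDerivAt (fun x => tanh x ^ 3 / 3 - tanh x ^ 5 / 5)
      (tanh x ^ 2 * (1 / cosh x) ^ 4) x := fun x => by
    refine (((hasDerivAt_tanh x).fun_pow 3).div_const 3).fun_sub
      (((hasDerivAt_tanh x).fun_pow 5).div_const 5) |>.congr_deriv ?_
    linear_combination (-tanh x ^ 2 * (1 / cosh x) ^ 2) * tanh_sq_add_sech_sq x
  rw [integral_of_hasDerivAt_of_tendsto hF integrable_tanh_sq_mul_sech_pow_four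
    (((tendsto_tanh_atBot.pow 3).div_const 3).sub ((tendsto_tanh_atBot.pow 5).div_const 5))
    (((tendsto_tanh_atTop.pow 3).div_const 3).sub ((tendsto_tanh_atTop.pow 5).div_const 5))]
  norm_num

/-- The translational zero mode `(υ₀, z₀)` of the Hessian of the exact coupled
solitary wave satisfies the coupled system `L₁(γ)υ₀ = sech·z₀`,
`L₂z₀ = 4(γ−4)sech·υ₀`, and the Krein quantity equals `(4/15)(γ−4)`. -/
theorem translational_zero_mode (γ : ℝ) (υ₀ z₀ : ℝ → ℝ)
    (hυ : υ₀ = fun η => Real.tanh η * (1 / Real.cosh η) ^ 2)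
    (hz : z₀ = fun η => (γ - 4) * Real.tanh η * (1 / Real.cosh η)) :
    (∀ η : ℝ, -deriv (deriv υ₀) η + γ * υ₀ η - 12 * (1 / Real.cosh η) ^ 2 * υ₀ η
      = (1 / Real.cosh η) * z₀ η) ∧
    (∀ η : ℝ, -deriv (deriv z₀) η + z₀ η - 2 * (1 / Real.cosh η) ^ 2 * z₀ η
      = 4 * (γ - 4) * (1 / Real.cosh η) * υ₀ η) ∧
    (∫ η : ℝ, (1 / Real.cosh η) * υ₀ η * z₀ η) = (4 / 15) * (γ - 4) := by
  subst hυ hz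
  refine ⟨fun η => ?_, fun η => ?_, ?_⟩
  · rw [deriv_deriv_eq_of_hasDerivAt hasDerivAt_tanh_mul_sech_sq
      hasDerivAt_sech_pow_four_sub_two_mul_tanh_sq_mul_sech_sq]
    linear_combination (-4 * tanh η * (1 / cosh η) ^ 2) * tanh_sq_add_sech_sq η
  · rw [deriv_deriv_eq_of_hasDerivAt (hasDerivAt_const_mul_tanh_mul_sech (γ - 4))
      (hasDerivAt_const_mul_sech_pow_three_sub_tanh_sq_mul_sech (γ - 4))]
    linear_combination (-(γ - 4) * tanh η * (1 / cosh η)) * tanh_sq_add_sech_sq η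
  · calc ∫ η, 1 / cosh η * (tanh η * (1 / cosh η) ^ 2) * ((γ - 4) * tanh η * (1 / cosh η))
        = ∫ η, (γ - 4) * (tanh η ^ 2 * (1 / cosh η) ^ 4) := by congr 1; ext η; ring
      _ = 4 / 15 * (γ - 4) := by rw [integral_const_mul, integral_tanh_sq_mul_sech_pow_four]; ring
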